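/- Let X be a topological space and 𝒞 a set of closed subsets of X equipped with the Thurston topology. Let f : 𝒞 → 𝒞 be a homeomorphism with respect to the Thurston topology. If A ∈ 𝒞 is maximal for inclusion in 𝒞 (i.e. there is no C ∈ 𝒞 with A ⊊ C), then f(A) is maximal for inclusion in 𝒞. -/

import Mathlib

/-!
In the Thurston topology a member `A` of `𝒞` specializes to `B` exactly when `B ⊆ closure A`,
so on a family of closed sets the specialization preorder is inclusion. A homeomorphism
preserves specialization, hence inclusion, hence maximality for inclusion.
-/

open Topology

/-- The Thurston topology on a set `𝒞` of subsets of a topological space `X`: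
the topology generated by the subbasis consisting of the sets
`U_V = {A ∈ 𝒞 : A ∩ V ≠ ∅}` for `V` open in `X`. -/
def thurstonTop {X : Type*} [TopologicalSpace X] (𝒞 : Set (Set X)) :
    TopologicalSpace 𝒞 :=
  TopologicalSpace.generateFrom
    {U | ∃ V : Set X, IsOpen V ∧ U = {A : 𝒞 | ((A : Set X) ∩ V).Nonempty}}

theorem TopologicalSpace.specializes_generateFrom_iff {α : Type*} {g : Set (Set α)} {x y : α} :
    @Specializes α (generateFrom g) x y ↔ ∀ s ∈ g, y ∈ s → x ∈ s := by
  let _ := generateFrom g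
  refine ⟨fun h s hs hy => h.mem_open (isOpen_generateFrom_of_mem hs) hy, fun h => ?_⟩
  simp_rw [Specializes, nhds_generateFrom, le_iInf₂_iff]
  exact fun s ⟨hy, hs⟩ => iInf₂_le s ⟨h s hs hy, hs⟩

theorem subset_closure_iff_forall_isOpen {X : Type*} [TopologicalSpace X] {s t : Set X} :
    t ⊆ closure s ↔ ∀ V, IsOpen V → (t ∩ V).Nonempty → (s ∩ V).Nonempty := by
  simp only [Set.subset_def, mem_closure_iff]
  refine ⟨fun h V hV ⟨x, hxt, hxV⟩ => (h x hxt V hV hxV).mono fun _ => And.symm,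
    fun h x hxt V hV hxV => (h V hV ⟨x, hxt, hxV⟩).mono fun _ => And.symm⟩

section Thurston

variable {X : Type*} [TopologicalSpace X] {𝒞 : Set (Set X)}

theorem thurstonTop_specializes_iff {A B : 𝒞} :
    @Specializes 𝒞 (thurstonTop 𝒞) A B ↔ (B : Set X) ⊆ closure A := by
  rw [thurstonTop, TopologicalSpace.specializes_generateFrom_iff, subset_closure_iff_forall_isOpen]
  constructor
  · exact fun h V hV => h _ ⟨V, hV, rfl⟩
  · rintro h _ ⟨V, hV, rfl⟩
    exact h V hV

theorem thurstonTop_specializes_iff_of_isClosed {A B : 𝒞} (hA : IsClosed (A : Set X)) :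
    @Specializes 𝒞 (thurstonTop 𝒞) A B ↔ (B : Set X) ⊆ A := by
  rw [thurstonTop_specializes_iff, hA.closure_eq]

theorem Homeomorph.thurstonTop_subset_iff (hcl : ∀ C ∈ 𝒞, IsClosed C)
    (f : @Homeomorph 𝒞 𝒞 (thurstonTop 𝒞) (thurstonTop 𝒞)) {B C : 𝒞} :
    (f B : Set X) ⊆ f C ↔ (B : Set X) ⊆ C := by
  let _ := thurstonTop 𝒞
  rw [← thurstonTop_specializes_iff_of_isClosed (hcl _ (f C).2),
    ← thurstonTop_specializes_iff_of_isClosed (hcl _ C.2), f.isInducing.specializes_iff]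

theorem Homeomorph.thurstonTop_ssubset_iff (hcl : ∀ C ∈ 𝒞, IsClosed C)
    (f : @Homeomorph 𝒞 𝒞 (thurstonTop 𝒞) (thurstonTop 𝒞)) {B C : 𝒞} :
    (f B : Set X) ⊂ f C ↔ (B : Set X) ⊂ C := by
  simp only [ssubset_iff_subset_not_subset, f.thurstonTop_subset_iff hcl]

end Thurston

/-- A homeomorphism of a set `𝒞` of closed subsets of `X` with respect to the Thurston
topology sends elements that are maximal for inclusion to elements that are maximal
for inclusion. -/
theorem homeomorph_maximal {X : Type*} [TopologicalSpace X]
    (𝒞 : Set (Set X)) (hcl : ∀ C ∈ 𝒞, IsClosed C)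
    (f : @Homeomorph 𝒞 𝒞 (thurstonTop 𝒞) (thurstonTop 𝒞))
    (A : 𝒞) (hA : ¬ ∃ C : 𝒞, (A : Set X) ⊂ (C : Set X)) :
    ¬ ∃ C : 𝒞, (f A : Set X) ⊂ (C : Set X) := by
  let _ := thurstonTop 𝒞
  rintro ⟨C, hC⟩
  obtain ⟨B, rfl⟩ := f.surjective C
  rw [f.thurstonTop_ssubset_iff hcl] at hC
  exact hA ⟨_, hC⟩
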